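/- Let S = (P, L) be a generalized quadrangle of order (2,2) and let (R, ψ) be a faithful representation of S. Then |R| = 2^4 or |R| = 2^5. -/

import Mathlib

open scoped Classical

/-- A slim partial linear space: a nonempty point set, a nonempty collection of
lines each of which is a 3-element set of points, such that any two distinct
points lie in at most one common line. -/
structure SlimPLS (P : Type*) where
  lines : Set (Finset P)
  nonempty_pts : Nonempty P
  nonempty_lines : lines.Nonempty
  three_points : ∀ l ∈ lines, l.card = 3
  unique_line : ∀ l₁ ∈ lines, ∀ l₂ ∈ lines, ∀ x y : P,
    x ≠ y → x ∈ l₁ → y ∈ l₁ → x ∈ l₂ → y ∈ l₂ → l₁ = l₂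

namespace SlimPLS

variable {P : Type*}

/-- Two points are collinear if they are distinct and lie on a common line. -/
def Collinear (S : SlimPLS P) (x y : P) : Prop :=
  x ≠ y ∧ ∃ l ∈ S.lines, x ∈ l ∧ y ∈ l

/-- The collinearity graph of a slim partial linear space. -/
def graph (S : SlimPLS P) : SimpleGraph P where
  Adj x y := S.Collinear x y
  symm := ⟨fun x y h => ⟨Ne.symm h.1, h.2.elim fun l hl => ⟨l, hl.1, hl.2.2, hl.2.1⟩⟩⟩
  loopless := ⟨fun x h => h.1 rfl⟩

/-- `S` is a generalized quadrangle of order `(2, t)`: it is connected, no point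
is collinear with all other points, every point is on exactly `t+1` lines, and
for every point `x` and line `l` with `x ∉ l` there is exactly one point of `l`
collinear with `x`. -/
def IsGQ (S : SlimPLS P) (t : ℕ) : Prop :=
  S.graph.Connected ∧
  (∀ x : P, ∃ y : P, y ≠ x ∧ ¬ S.Collinear x y) ∧
  (∀ x : P, {l | l ∈ S.lines ∧ x ∈ l}.ncard = t + 1) ∧
  (∀ x : P, ∀ l ∈ S.lines, x ∉ l → ∃! y : P, y ∈ l ∧ S.Collinear x y)

/-- A set of points is an arc if its points are pairwise non-collinear. -/
def IsArc (S : SlimPLS P) (T : Set P) : Prop :=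
  ∀ x ∈ T, ∀ y ∈ T, x ≠ y → ¬ S.Collinear x y

/-- `{a,b,c}` is a complete 3-arc: three pairwise distinct, pairwise
non-collinear points not contained in a 4-arc. -/
def Complete3Arc (S : SlimPLS P) (a b c : P) : Prop :=
  a ≠ b ∧ a ≠ c ∧ b ≠ c ∧ S.IsArc {a, b, c} ∧
  ∀ d : P, d ∉ ({a, b, c} : Set P) → ¬ S.IsArc (insert d {a, b, c})

/-- `{a,b,c}` is a complete 3-arc of the subset `Q`: three pairwise distinct,
pairwise non-collinear points of `Q` not contained in a 4-arc inside `Q`. -/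
def Complete3ArcIn (S : SlimPLS P) (Q : Set P) (a b c : P) : Prop :=
  a ∈ Q ∧ b ∈ Q ∧ c ∈ Q ∧ a ≠ b ∧ a ≠ c ∧ b ≠ c ∧ S.IsArc {a, b, c} ∧
  ∀ d ∈ Q, d ∉ ({a, b, c} : Set P) → ¬ S.IsArc (insert d {a, b, c})

/-- `Q` is a sub-generalized-quadrangle of order `(2,t)` of `S`: together with
the lines of `S` contained in it, `Q` is a `(2,t)`-GQ; in particular any line
meeting `Q` in at least two points is contained in `Q`. -/
def IsSubGQ (S : SlimPLS P) (Q : Set P) (t : ℕ) : Prop :=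
  Q.Nonempty ∧
  (∃ l ∈ S.lines, (l : Set P) ⊆ Q) ∧
  (∀ l ∈ S.lines, ∀ x ∈ l, ∀ y ∈ l, x ≠ y → x ∈ Q → y ∈ Q → (l : Set P) ⊆ Q) ∧
  (SimpleGraph.induce Q S.graph).Connected ∧
  (∀ x ∈ Q, ∃ y ∈ Q, y ≠ x ∧ ¬ S.Collinear x y) ∧
  (∀ x ∈ Q, {l | l ∈ S.lines ∧ x ∈ l ∧ (l : Set P) ⊆ Q}.ncard = t + 1) ∧
  (∀ x ∈ Q, ∀ l ∈ S.lines, (l : Set P) ⊆ Q → x ∉ l → ∃! y : P, y ∈ l ∧ S.Collinear x y)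

/-- `S` is a near hexagon: connected of diameter 3, no point collinear with all
other points, and for every point `x` and line `l` there is a unique point of
`l` nearest to `x`. -/
def IsNearHexagon (S : SlimPLS P) : Prop :=
  S.graph.Connected ∧
  (∀ x y : P, S.graph.dist x y ≤ 3) ∧
  (∃ x y : P, S.graph.dist x y = 3) ∧
  (∀ x : P, ∃ y : P, y ≠ x ∧ ¬ S.Collinear x y) ∧
  (∀ x : P, ∀ l ∈ S.lines, ∃! y : P, y ∈ l ∧ ∀ z ∈ l, S.graph.dist x y ≤ S.graph.dist x z)

/-- `S` is dense: any two points at distance 2 have at least two common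
neighbours. -/
def IsDense (S : SlimPLS P) : Prop :=
  ∀ x y : P, S.graph.dist x y = 2 →
    ∃ u v : P, u ≠ v ∧ S.Collinear x u ∧ S.Collinear u y ∧ S.Collinear x v ∧ S.Collinear v y

/-- `Q` is a quad: a convex subset of diameter 2 in which no point is collinear
with all other points of `Q`. -/
def IsQuad (S : SlimPLS P) (Q : Set P) : Prop :=
  (∀ u ∈ Q, ∀ v ∈ Q, ∀ w : P,
      S.graph.dist u w + S.graph.dist w v = S.graph.dist u v → w ∈ Q) ∧
  (∀ u ∈ Q, ∀ v ∈ Q, S.graph.dist u v ≤ 2) ∧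
  (∃ u ∈ Q, ∃ v ∈ Q, S.graph.dist u v = 2) ∧
  (∀ u ∈ Q, ∃ v ∈ Q, v ≠ u ∧ ¬ S.Collinear u v)

/-- A quad `Q` is of type `(2, t₂)` if every point of `Q` lies on exactly
`t₂ + 1` lines contained in `Q`. -/
def QuadType (S : SlimPLS P) (Q : Set P) (t₂ : ℕ) : Prop :=
  ∀ x ∈ Q, {l | l ∈ S.lines ∧ x ∈ l ∧ (l : Set P) ⊆ Q}.ncard = t₂ + 1

/-- The point-quad pair `(x, Q)` is classical: there is a unique point `y ∈ Q`
nearest to `x`, with `d(x,z) = d(x,y) + d(y,z)` for all `z ∈ Q`. -/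
def IsClassicalPair (S : SlimPLS P) (x : P) (Q : Set P) : Prop :=
  ∃! y : P, y ∈ Q ∧ ∀ z ∈ Q, S.graph.dist x z = S.graph.dist x y + S.graph.dist y z

/-- A quad is classical (big) if every point-quad pair with it is classical. -/
def IsClassicalQuad (S : SlimPLS P) (Q : Set P) : Prop :=
  ∀ x : P, S.IsClassicalPair x Q

/-- A subspace: any line containing two of its points is contained in it. -/
def IsSubspace (S : SlimPLS P) (X : Set P) : Prop :=
  ∀ l ∈ S.lines, ∀ x ∈ l, ∀ y ∈ l, x ≠ y → x ∈ X → y ∈ X → (l : Set P) ⊆ X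

/-- The subspace generated by a set of points. -/
def subspaceGen (S : SlimPLS P) (A : Set P) : Set P :=
  ⋂₀ {X | S.IsSubspace X ∧ A ⊆ X}

/-- `NPdim S` is the rank over `F₂` of the distance-3 adjacency matrix. -/
noncomputable def NPdim [Fintype P] (S : SlimPLS P) : ℕ :=
  Matrix.rank (Matrix.of fun x y : P => if S.graph.dist x y = 3 then (1 : ZMod 2) else 0)

/-- `dimV S` is the dimension of the universal representation module of `S`:
the free `F₂`-vector space on the points modulo the span of the elements
`v_x + v_y + v_z` for the lines `{x,y,z}`. -/
noncomputable def dimV (S : SlimPLS P) : ℕ :=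
  Module.finrank (ZMod 2)
    ((P →₀ ZMod 2) ⧸ Submodule.span (ZMod 2)
      {f : P →₀ ZMod 2 | ∃ l ∈ S.lines, f = ∑ x ∈ l, Finsupp.single x 1})

end SlimPLS

/-- A representation of a slim partial linear space `S`: an assignment of an
order-2 element `r x` of `R` to each point `x`, such that the images generate
`R` and for every line `{x,y,z}` the set `{1, r x, r y, r z}` is a Klein four
subgroup (`r x * r y = r z` for the three pairwise distinct points of a line). -/
structure SlimPLS.Rep {P : Type*} (S : SlimPLS P) (R : Type*) [Group R] where
  r : P → R
  order_two : ∀ x : P, orderOf (r x) = 2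
  gen : Subgroup.closure (Set.range r) = ⊤
  line_rel : ∀ l ∈ S.lines, ∀ x ∈ l, ∀ y ∈ l, ∀ z ∈ l,
    x ≠ y → x ≠ z → y ≠ z → r x * r y = r z

/-- A finite 2-group is extraspecial if its Frattini subgroup, commutator
subgroup and center coincide and have order 2. -/
def IsExtraspecial (G : Type*) [Group G] : Prop :=
  Finite G ∧ IsPGroup 2 G ∧ frattini G = commutator G ∧
    commutator G = Subgroup.center G ∧ Nat.card (Subgroup.center G) = 2


/-!
Two non-collinear points `x`, `y` of a `(2,t)`-GQ with `t ≥ 1` lie in a grid: lines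
`x u₁ a₁`, `x u₂ a₂`, `y u₁ b₁`, `y u₂ b₂`, and two lines `a₁ b₂ m`, `a₂ b₁ m` through a common
point `m`. In a representation the grid gives
`r x * r y = r u₁ * r a₁ * r b₂ * r u₂ = r u₁ * r m * r u₂ = r u₁ * r b₁ * r a₂ * r u₂ = r y * r x`,
so `R` is an elementary abelian `2`-group, i.e. an `𝔽₂`-vector space. The same grid shows that
a subspace of the geometry containing `x`, `y` and their (at most `t + 1`) common neighbours is
everything, so `R` is spanned by `t + 3` vectors and `|R| = 2 ^ k` with `k ≤ t + 3`.
Faithfulness maps `x`, `y` and the `2 (t + 1)` neighbours of `x` injectively into `R ∖ {1}`,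
so `2 ^ k ≥ 2 t + 5`; for `t = 2` only `k = 4, 5` remain.
-/

namespace SlimPLS

variable {P : Type*} {S : SlimPLS P} {t : ℕ} {a b c e m x y : P}

def IsLine (S : SlimPLS P) (a b c : P) : Prop :=
  ({a, b, c} : Finset P) ∈ S.lines

lemma Collinear.symm (h : S.Collinear a b) : S.Collinear b a :=
  S.graph.adj_symm h

namespace IsLine

lemma pairwise_ne (h : S.IsLine a b c) : a ≠ b ∧ a ≠ c ∧ b ≠ c := by
  have h3 := S.three_points _ h
  refine ⟨?_, ?_, ?_⟩ <;> rintro rfl <;>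
    simp only [Finset.insert_eq_of_mem, Finset.mem_insert_self, Finset.mem_insert_of_mem,
      Finset.mem_singleton_self] at h3 <;>
    exact absurd (h3 ▸ Finset.card_le_two) (by norm_num)

lemma rotate (h : S.IsLine a b c) : S.IsLine b c a := by
  rwa [IsLine, Finset.pair_comm, Finset.insert_comm]

lemma swap (h : S.IsLine a b c) : S.IsLine b a c := by
  rwa [IsLine, Finset.insert_comm]

lemma swap₂₃ (h : S.IsLine a b c) : S.IsLine a c b :=
  h.rotate.rotate.swap

lemma collinear (h : S.IsLine a b c) : S.Collinear a b :=
  ⟨h.pairwise_ne.1, _, h, by simp, by simp⟩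

end IsLine

lemma Collinear.exists_isLine (h : S.Collinear a b) : ∃ c, S.IsLine a b c := by
  obtain ⟨hab, l, hl, ha, hb⟩ := h
  obtain ⟨c, hc⟩ := Finset.card_eq_one.mp (show ((l.erase a).erase b).card = 1 by
    rw [Finset.card_erase_of_mem (Finset.mem_erase.mpr ⟨hab.symm, hb⟩),
      Finset.card_erase_of_mem ha, S.three_points l hl])
  refine ⟨c, ?_⟩
  rwa [IsLine, ← hc, Finset.insert_erase (Finset.mem_erase.mpr ⟨hab.symm, hb⟩),
    Finset.insert_erase ha]

namespace IsGQ

lemma eq_of_collinear_of_collinear (hGQ : S.IsGQ t) (h : S.IsLine a b c)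
    (hea : S.Collinear e a) (heb : S.Collinear e b) : e = c := by
  by_contra hec
  have he : e ∉ ({a, b, c} : Finset P) := by
    simp only [Finset.mem_insert, Finset.mem_singleton, not_or]
    exact ⟨hea.1, heb.1, hec⟩
  obtain ⟨w, -, huniq⟩ := hGQ.2.2.2 e _ h he
  exact h.pairwise_ne.1 ((huniq a ⟨by simp, hea⟩).trans (huniq b ⟨by simp, heb⟩).symm)

lemma not_collinear (hGQ : S.IsGQ t) (h : S.IsLine a b c) (hea : S.Collinear e a) (hec : e ≠ c) :
    ¬ S.Collinear e b :=
  fun heb => hec (hGQ.eq_of_collinear_of_collinear h hea heb)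

lemma collinear_of_not_collinear (hGQ : S.IsGQ t) (h : S.IsLine a b c) (hec : e ≠ c)
    (hea : ¬ S.Collinear e a) (heb : ¬ S.Collinear e b) : S.Collinear e c := by
  have he : e ∉ ({a, b, c} : Finset P) := by
    simp only [Finset.mem_insert, Finset.mem_singleton, not_or]
    refine ⟨?_, ?_, hec⟩ <;> rintro rfl
    exacts [heb h.collinear, hea h.collinear.symm]
  obtain ⟨w, ⟨hw, hew⟩, -⟩ := hGQ.2.2.2 e _ h he
  simp only [Finset.mem_insert, Finset.mem_singleton] at hw
  rcases hw with rfl | rfl | rfl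
  exacts [(hea hew).elim, (heb hew).elim, hew]

lemma exists_two_lines_through (hGQ : S.IsGQ t) (ht : 1 ≤ t) (x : P) :
    ∃ l₁ ∈ S.lines, ∃ l₂ ∈ S.lines, l₁ ≠ l₂ ∧ x ∈ l₁ ∧ x ∈ l₂ := by
  have hcard := hGQ.2.2.1 x
  obtain ⟨l₁, l₂, ⟨hl₁, hx₁⟩, ⟨hl₂, hx₂⟩, hne⟩ :=
    (Set.one_lt_ncard_iff (Set.finite_of_ncard_ne_zero (s := {l | l ∈ S.lines ∧ x ∈ l})
      (by omega))).mp (by omega)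
  exact ⟨l₁, hl₁, l₂, hl₂, hne, hx₁, hx₂⟩

lemma exists_two_common_neighbours (hGQ : S.IsGQ t) (ht : 1 ≤ t) (hxy : x ≠ y)
    (hnc : ¬ S.Collinear x y) :
    ∃ u₁ u₂, u₁ ≠ u₂ ∧ S.Collinear x u₁ ∧ S.Collinear y u₁ ∧ S.Collinear x u₂ ∧
      S.Collinear y u₂ := by
  obtain ⟨l₁, hl₁, l₂, hl₂, hne, hx₁, hx₂⟩ := hGQ.exists_two_lines_through ht x
  have hy : ∀ l ∈ S.lines, x ∈ l → y ∉ l := fun l hl hx hy => hnc ⟨hxy, l, hl, hx, hy⟩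
  obtain ⟨u₁, ⟨hu₁, hyu₁⟩, -⟩ := hGQ.2.2.2 y l₁ hl₁ (hy l₁ hl₁ hx₁)
  obtain ⟨u₂, ⟨hu₂, hyu₂⟩, -⟩ := hGQ.2.2.2 y l₂ hl₂ (hy l₂ hl₂ hx₂)
  have hxu : ∀ {u}, S.Collinear y u → x ≠ u := fun hyu hxu => hnc (hxu ▸ hyu).symm
  refine ⟨u₁, u₂, fun h => hne ?_, ⟨hxu hyu₁, l₁, hl₁, hx₁, hu₁⟩, hyu₁,
    ⟨hxu hyu₂, l₂, hl₂, hx₂, hu₂⟩, hyu₂⟩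
  exact S.unique_line l₁ hl₁ l₂ hl₂ x u₁ (hxu hyu₁) hx₁ hu₁ hx₂ (h ▸ hu₂)

lemma exists_finset_lines_through (hGQ : S.IsGQ t) (x : P) :
    ∃ L : Finset (Finset P), L.card = t + 1 ∧ ∀ l, l ∈ L ↔ l ∈ S.lines ∧ x ∈ l := by
  have hL : {l | l ∈ S.lines ∧ x ∈ l}.Finite :=
    Set.finite_of_ncard_ne_zero (by rw [hGQ.2.2.1 x]; omega)
  exact ⟨hL.toFinset, by rw [← Set.ncard_eq_toFinset_card _ hL, hGQ.2.2.1 x],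
    fun _ => hL.mem_toFinset⟩

lemma exists_finset_card_eq_two_mul_add_four (hGQ : S.IsGQ t) :
    ∃ s : Finset P, s.card = 2 * t + 4 := by
  obtain ⟨x⟩ := S.nonempty_pts
  obtain ⟨y, hyx, hnc⟩ := hGQ.2.1 x
  obtain ⟨L, hLcard, hL⟩ := hGQ.exists_finset_lines_through x
  set N := L.biUnion (·.erase x)
  have hdisj : (L : Set (Finset P)).PairwiseDisjoint (·.erase x) := by
    intro l₁ h₁ l₂ h₂ hne
    rw [Finset.mem_coe, hL] at h₁ h₂
    refine Finset.disjoint_left.mpr fun p hp₁ hp₂ => hne ?_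
    rw [Finset.mem_erase] at hp₁ hp₂
    exact S.unique_line _ h₁.1 _ h₂.1 x p hp₁.1.symm h₁.2 hp₁.2 h₂.2 hp₂.2
  have hN : N.card = 2 * (t + 1) := by
    rw [Finset.card_biUnion hdisj, Finset.sum_congr rfl fun l hl => by
      rw [Finset.card_erase_of_mem ((hL l).mp hl).2, S.three_points l ((hL l).mp hl).1],
      Finset.sum_const, hLcard, smul_eq_mul, mul_comm]
  have hxN : x ∉ N := by simp [N]
  have hyN : y ∉ N := by
    simp only [N, Finset.mem_biUnion, Finset.mem_erase, hL, not_exists, not_and]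
    exact fun l hl _ hyl => hnc ⟨hyx.symm, l, hl.1, hl.2, hyl⟩
  refine ⟨insert x (insert y N), ?_⟩
  rw [Finset.card_insert_of_notMem (by simp [hyx.symm, hxN]), Finset.card_insert_of_notMem hyN,
    hN]
  ring

lemma exists_common_neighbours_subset_finset (hGQ : S.IsGQ t) (hxy : x ≠ y)
    (hnc : ¬ S.Collinear x y) :
    ∃ s : Finset P, s.card ≤ t + 1 ∧ ∀ u, S.Collinear x u → S.Collinear y u → u ∈ s := by
  obtain ⟨L, hLcard, hL⟩ := hGQ.exists_finset_lines_through x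
  refine ⟨L.biUnion fun l => l.filter (S.Collinear y), ?_, ?_⟩
  · have hle : ∀ l ∈ L, (l.filter (S.Collinear y)).card ≤ 1 := by
      intro l hl
      rw [hL] at hl
      obtain ⟨w, -, huniq⟩ :=
        hGQ.2.2.2 y l hl.1 fun hyl => hnc ⟨hxy, l, hl.1, hl.2, hyl⟩
      refine Finset.card_le_one.mpr fun a ha b hb => ?_
      rw [Finset.mem_filter] at ha hb
      exact (huniq a ha).trans (huniq b hb).symm
    calc _ ≤ ∑ l ∈ L, (l.filter (S.Collinear y)).card := Finset.card_biUnion_le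
      _ ≤ ∑ _l ∈ L, 1 := Finset.sum_le_sum hle
      _ = t + 1 := by rw [Finset.sum_const, hLcard, smul_eq_mul, mul_one]
  · rintro u ⟨-, l, hl, hxl, hul⟩ hyu
    exact Finset.mem_biUnion.mpr ⟨l, (hL l).mpr ⟨hl, hxl⟩, Finset.mem_filter.mpr ⟨hul, hyu⟩⟩

section Grid

variable {u₁ u₂ a₁ a₂ b₁ b₂ : P}

lemma collinear_of_grid (hGQ : S.IsGQ t) (hxy : x ≠ y) (hu : u₁ ≠ u₂)
    (h₁ : S.IsLine x u₁ a₁) (h₂ : S.IsLine x u₂ a₂) (h₃ : S.IsLine y u₁ b₁)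
    (h₄ : S.IsLine y u₂ b₂) : S.Collinear a₁ b₂ := by
  have hya₁ : ¬ S.Collinear y a₁ := hGQ.not_collinear h₁.rotate h₃.collinear hxy.symm
  have hu₂a₁ : ¬ S.Collinear u₂ a₁ :=
    hGQ.not_collinear h₁.swap₂₃ h₂.collinear.symm hu.symm
  refine hGQ.collinear_of_not_collinear h₄ ?_ (fun h => hya₁ h.symm) (fun h => hu₂a₁ h.symm)
  rintro rfl
  exact hya₁ h₄.swap₂₃.collinear

lemma collinear_third_of_grid (hGQ : S.IsGQ t) (hxy : x ≠ y) (hnc : ¬ S.Collinear x y)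
    (h₁ : S.IsLine x u₁ a₁) (h₂ : S.IsLine x u₂ a₂) (h₃ : S.IsLine y u₁ b₁)
    (h₄ : S.IsLine y u₂ b₂) (h₅ : S.IsLine a₁ b₂ m) : S.Collinear a₂ m := by
  have hya₂ : ¬ S.Collinear y a₂ := hGQ.not_collinear h₂.rotate h₄.collinear hxy.symm
  have ha₂u₁ : a₂ ≠ u₁ := by
    rintro rfl
    exact hya₂ h₃.collinear
  have ha₂a₁ : ¬ S.Collinear a₂ a₁ :=
    hGQ.not_collinear h₁.swap₂₃ h₂.swap₂₃.collinear.symm ha₂u₁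
  have ha₂b₂ : ¬ S.Collinear a₂ b₂ := by
    refine hGQ.not_collinear h₄.rotate h₂.rotate.collinear.symm ?_
    rintro rfl
    exact hnc h₂.swap₂₃.collinear
  refine hGQ.collinear_of_not_collinear h₅ ?_ ha₂a₁ ha₂b₂
  rintro rfl
  exact ha₂a₁ h₅.swap₂₃.collinear.symm

lemma exists_grid_closing (hGQ : S.IsGQ t) (hxy : x ≠ y) (hnc : ¬ S.Collinear x y)
    (hu : u₁ ≠ u₂) (h₁ : S.IsLine x u₁ a₁) (h₂ : S.IsLine x u₂ a₂) (h₃ : S.IsLine y u₁ b₁)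
    (h₄ : S.IsLine y u₂ b₂) : ∃ m, S.IsLine a₁ b₂ m ∧ S.IsLine a₂ b₁ m := by
  obtain ⟨m, h₅⟩ := (hGQ.collinear_of_grid hxy hu h₁ h₂ h₃ h₄).exists_isLine
  obtain ⟨m', h₆⟩ := (hGQ.collinear_of_grid hxy hu.symm h₂ h₁ h₄ h₃).exists_isLine
  have hma₂ := (hGQ.collinear_third_of_grid hxy hnc h₁ h₂ h₃ h₄ h₅).symm
  have hmb₁ := (hGQ.collinear_third_of_grid hxy.symm (fun h => hnc h.symm) h₄ h₃ h₂ h₁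
    h₅.swap).symm
  obtain rfl := hGQ.eq_of_collinear_of_collinear h₆ hma₂ hmb₁
  exact ⟨m, h₅, h₆⟩

end Grid

lemma exists_grid (hGQ : S.IsGQ t) (ht : 1 ≤ t) (hxy : x ≠ y) (hnc : ¬ S.Collinear x y) :
    ∃ u₁ u₂ a₁ a₂ b₁ b₂ m, S.IsLine x u₁ a₁ ∧ S.IsLine x u₂ a₂ ∧ S.IsLine y u₁ b₁ ∧
      S.IsLine y u₂ b₂ ∧ S.IsLine a₁ b₂ m ∧ S.IsLine a₂ b₁ m := by
  obtain ⟨u₁, u₂, hu, hxu₁, hyu₁, hxu₂, hyu₂⟩ :=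
    hGQ.exists_two_common_neighbours ht hxy hnc
  obtain ⟨a₁, h₁⟩ := hxu₁.exists_isLine
  obtain ⟨a₂, h₂⟩ := hxu₂.exists_isLine
  obtain ⟨b₁, h₃⟩ := hyu₁.exists_isLine
  obtain ⟨b₂, h₄⟩ := hyu₂.exists_isLine
  obtain ⟨m, h₅, h₆⟩ := hGQ.exists_grid_closing hxy hnc hu h₁ h₂ h₃ h₄
  exact ⟨u₁, u₂, a₁, a₂, b₁, b₂, m, h₁, h₂, h₃, h₄, h₅, h₆⟩

end IsGQ

end SlimPLS

namespace SlimPLS.IsSubspace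

variable {P : Type*} {S : SlimPLS P} {t : ℕ} {X : Set P} {a b c x y z : P}

lemma mem_of_isLine (hX : S.IsSubspace X) (h : S.IsLine a b c) (ha : a ∈ X) (hb : b ∈ X) :
    c ∈ X :=
  hX _ h a (by simp) b (by simp) h.pairwise_ne.1 ha hb (by simp)

lemma mem_of_collinear_left (hGQ : S.IsGQ t) (hX : S.IsSubspace X) (hxy : x ≠ y)
    (hnc : ¬ S.Collinear x y) (hcommon : ∀ u, S.Collinear x u → S.Collinear y u → u ∈ X)
    (hx : x ∈ X) (hxz : S.Collinear x z) : z ∈ X := by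
  obtain ⟨w, h⟩ := hxz.exists_isLine
  by_cases hyz : S.Collinear y z
  · exact hcommon z hxz hyz
  by_cases hyw : S.Collinear y w
  · exact hX.mem_of_isLine h.swap₂₃ hx (hcommon w h.swap₂₃.collinear hyw)
  exact absurd (hGQ.collinear_of_not_collinear h.rotate hxy.symm hyz hyw).symm hnc

lemma mem_of_collinear_right (hGQ : S.IsGQ t) (hX : S.IsSubspace X) (hxy : x ≠ y)
    (hnc : ¬ S.Collinear x y) (hcommon : ∀ u, S.Collinear x u → S.Collinear y u → u ∈ X)
    (hx : x ∈ X) (hy : y ∈ X) (hyz : S.Collinear y z) : z ∈ X := by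
  have hxX : ∀ {w}, S.Collinear x w → w ∈ X := hX.mem_of_collinear_left hGQ hxy hnc hcommon hx
  by_cases hxz : S.Collinear x z
  · exact hxX hxz
  obtain ⟨w, h⟩ := hyz.exists_isLine
  have hxw : S.Collinear x w := by
    refine hGQ.collinear_of_not_collinear h ?_ hnc hxz
    rintro rfl
    exact hnc h.swap₂₃.collinear.symm
  exact hX.mem_of_isLine h.swap₂₃ hy (hxX hxw)

lemma eq_univ (hGQ : S.IsGQ t) (ht : 1 ≤ t) (hX : S.IsSubspace X) (hxy : x ≠ y)
    (hnc : ¬ S.Collinear x y) (hcommon : ∀ u, S.Collinear x u → S.Collinear y u → u ∈ X)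
    (hx : x ∈ X) (hy : y ∈ X) : X = Set.univ := by
  have hxX : ∀ {w}, S.Collinear x w → w ∈ X := hX.mem_of_collinear_left hGQ hxy hnc hcommon hx
  have hyX : ∀ {w}, S.Collinear y w → w ∈ X :=
    hX.mem_of_collinear_right hGQ hxy hnc hcommon hx hy
  refine Set.eq_univ_of_forall fun z => ?_
  by_cases hxz : S.Collinear x z
  · exact hxX hxz
  by_cases hyz : S.Collinear y z
  · exact hyX hyz
  obtain rfl | hzy := eq_or_ne y z
  · exact hy
  obtain ⟨c₁, c₂, p₁, p₂, q₁, q₂, m, h₁, h₂, h₃, h₄, h₅, -⟩ := hGQ.exists_grid ht hzy hyz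
  have hz : ∀ {c q}, S.Collinear y c → S.IsLine z c q → q ∈ X → z ∈ X :=
    fun hyc h hq => hX.mem_of_isLine h.rotate (hyX hyc) hq
  -- `x` is collinear with exactly one point of each line `z cᵢ qᵢ`. If it is never `qᵢ`, then
  -- `x ∼ c₁`, so `x ≁ p₁`, hence `x ∼ m`, and the line `p₁ m q₂` puts `q₂` into `X`.
  by_cases hxq₂ : S.Collinear x q₂
  · exact hz h₂.collinear h₄ (hxX hxq₂)
  by_cases hxq₁ : S.Collinear x q₁
  · exact hz h₁.collinear h₃ (hxX hxq₁)
  have hxc₁ : S.Collinear x c₁ := by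
    refine hGQ.collinear_of_not_collinear h₃.swap₂₃ ?_ hxz hxq₁
    rintro rfl
    exact hnc h₁.collinear.symm
  have hxp₁ : ¬ S.Collinear x p₁ := hGQ.not_collinear h₁.rotate hxc₁ hxy
  have hxm : S.Collinear x m := by
    refine hGQ.collinear_of_not_collinear h₅ ?_ hxp₁ hxq₂
    rintro rfl
    exact hxp₁ h₅.swap₂₃.collinear.symm
  exact hz h₂.collinear h₄ (hX.mem_of_isLine h₅.swap₂₃ (hyX h₁.swap₂₃.collinear) (hxX hxm))

end SlimPLS.IsSubspace

lemma CommGroup.exists_natCard_eq_two_pow {G : Type*} [CommGroup G] (h2 : ∀ g : G, g ^ 2 = 1)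
    (s : Finset G) (hs : Subgroup.closure (s : Set G) = ⊤) :
    ∃ k ≤ s.card, Nat.card G = 2 ^ k := by
  let _ : Module (ZMod 2) (Additive G) := AddCommGroup.zmodModule fun g => h2 g.toMul
  let s' : Finset (Additive G) := s.image Additive.ofMul
  have hclosure : AddSubgroup.closure (s' : Set (Additive G)) = ⊤ := by
    rw [Finset.coe_image, Equiv.image_eq_preimage_symm]
    exact (Subgroup.toAddSubgroup_closure (s : Set G)).symm.trans (by rw [hs]; rfl)
  have hspan : Submodule.span (ZMod 2) (s' : Set (Additive G)) = ⊤ :=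
    eq_top_iff.mpr fun g _ => (AddSubgroup.closure_le (Submodule.span (ZMod 2) _).toAddSubgroup
      |>.mpr Submodule.subset_span) (hclosure ▸ AddSubgroup.mem_top g)
  have : Module.Finite (ZMod 2) (Additive G) := ⟨⟨s', hspan⟩⟩
  refine ⟨Module.finrank (ZMod 2) (Additive G), ?_, ?_⟩
  · calc Module.finrank (ZMod 2) (Additive G)
        = Module.finrank (ZMod 2) (Submodule.span (ZMod 2) (s' : Set (Additive G))) := by
          rw [hspan, finrank_top]
      _ ≤ s'.card := finrank_span_finset_le_card s'
      _ ≤ s.card := Finset.card_image_le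
  · exact (Module.natCard_eq_pow_finrank (K := ZMod 2) (V := Additive G)).trans
      (by rw [Nat.card_zmod])

namespace SlimPLS.Rep

variable {P : Type*} {S : SlimPLS P} {t : ℕ} {R : Type*} [Group R] {a b c : P}

lemma mul_self (ρ : S.Rep R) (p : P) : ρ.r p * ρ.r p = 1 := by
  rw [← pow_two, ← ρ.order_two p, pow_orderOf_eq_one]

lemma ne_one (ρ : S.Rep R) (p : P) : ρ.r p ≠ 1 := fun h => by
  simpa [h] using ρ.order_two p

lemma mul_of_isLine (ρ : S.Rep R) (h : S.IsLine a b c) : ρ.r a * ρ.r b = ρ.r c :=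
  ρ.line_rel _ h a (by simp) b (by simp) c (by simp) h.pairwise_ne.1 h.pairwise_ne.2.1
    h.pairwise_ne.2.2

lemma commute (ρ : S.Rep R) (hGQ : S.IsGQ t) (ht : 1 ≤ t) (p q : P) :
    Commute (ρ.r p) (ρ.r q) := by
  obtain rfl | hpq := eq_or_ne p q
  · exact Commute.refl _
  by_cases hc : S.Collinear p q
  · obtain ⟨c, h⟩ := hc.exists_isLine
    exact (ρ.mul_of_isLine h).trans (ρ.mul_of_isLine h.swap).symm
  obtain ⟨u₁, u₂, a₁, a₂, b₁, b₂, m, h₁, h₂, h₃, h₄, h₅, h₆⟩ := hGQ.exists_grid ht hpq hc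
  calc ρ.r p * ρ.r q = ρ.r u₁ * (ρ.r a₁ * ρ.r b₂) * ρ.r u₂ := by
        rw [← ρ.mul_of_isLine h₁.rotate, ← ρ.mul_of_isLine h₄.rotate.rotate.swap₂₃]; group
    _ = ρ.r u₁ * (ρ.r b₁ * ρ.r a₂) * ρ.r u₂ := by
        rw [ρ.mul_of_isLine h₅, ρ.mul_of_isLine h₆.swap]
    _ = ρ.r q * ρ.r p := by
        rw [← ρ.mul_of_isLine h₃.rotate, ← ρ.mul_of_isLine h₂.rotate.rotate.swap₂₃]; group

lemma mul_comm (ρ : S.Rep R) (hGQ : S.IsGQ t) (ht : 1 ≤ t) (g h : R) : g * h = h * g := by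
  have := Subgroup.isMulCommutative_closure (k := Set.range ρ.r) <| by
    rintro _ ⟨p, rfl⟩ _ ⟨q, rfl⟩
    exact ρ.commute hGQ ht p q
  exact setLike_mul_comm (ρ.gen ▸ Subgroup.mem_top g) (ρ.gen ▸ Subgroup.mem_top h)

lemma sq_eq_one (ρ : S.Rep R) (hGQ : S.IsGQ t) (ht : 1 ≤ t) (g : R) : g ^ 2 = 1 := by
  induction (ρ.gen ▸ Subgroup.mem_top g : g ∈ Subgroup.closure (Set.range ρ.r))
    using Subgroup.closure_induction with
  | mem _ hg =>
    obtain ⟨p, rfl⟩ := hg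
    rw [pow_two, ρ.mul_self]
  | one => exact one_pow 2
  | mul g h _ _ hg hh =>
    rw [Commute.mul_pow (ρ.mul_comm hGQ ht g h), hg, hh, one_mul]
  | inv g _ hg => rw [inv_pow, hg, inv_one]

lemma isSubspace_preimage (ρ : S.Rep R) (H : Subgroup R) :
    S.IsSubspace {p | ρ.r p ∈ H} := by
  intro l hl x hx y hy hxy hxH hyH z hz
  obtain rfl | hzx := eq_or_ne z x
  · exact hxH
  obtain rfl | hzy := eq_or_ne z y
  · exact hyH
  rw [Set.mem_ofPred_eq, ← ρ.line_rel l hl x hx y hy z hz hxy hzx.symm hzy.symm]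
  exact H.mul_mem hxH hyH

lemma closure_image_eq_top (ρ : S.Rep R) (hGQ : S.IsGQ t) (ht : 1 ≤ t) {x y : P}
    (hxy : x ≠ y) (hnc : ¬ S.Collinear x y) (s : Finset P)
    (hs : ∀ u, S.Collinear x u → S.Collinear y u → u ∈ s) :
    Subgroup.closure (((insert x (insert y s)).image ρ.r : Finset R) : Set R) = ⊤ := by
  set H := Subgroup.closure (((insert x (insert y s)).image ρ.r : Finset R) : Set R)
  have hmem : ∀ p ∈ insert x (insert y s), ρ.r p ∈ H := fun p hp =>
    Subgroup.subset_closure (Finset.mem_coe.mpr (Finset.mem_image_of_mem ρ.r hp))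
  have hX := (ρ.isSubspace_preimage H).eq_univ hGQ ht hxy hnc
    (fun u hxu hyu => hmem u (by simp [hs u hxu hyu])) (hmem x (by simp)) (hmem y (by simp))
  rw [eq_top_iff, ← ρ.gen, Subgroup.closure_le]
  rintro _ ⟨p, rfl⟩
  exact Set.eq_univ_iff_forall.mp hX p

lemma exists_natCard_eq_two_pow (ρ : S.Rep R) (hGQ : S.IsGQ t) (ht : 1 ≤ t) :
    ∃ k ≤ t + 3, Nat.card R = 2 ^ k := by
  obtain ⟨x⟩ := S.nonempty_pts
  obtain ⟨y, hyx, hnc⟩ := hGQ.2.1 x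
  obtain ⟨s, hcard, hs⟩ := hGQ.exists_common_neighbours_subset_finset hyx.symm hnc
  let _ : CommGroup R := { ‹Group R› with mul_comm := ρ.mul_comm hGQ ht }
  obtain ⟨k, hk, hR⟩ := CommGroup.exists_natCard_eq_two_pow (ρ.sq_eq_one hGQ ht) _
    (ρ.closure_image_eq_top hGQ ht hyx.symm hnc s hs)
  refine ⟨k, hk.trans ?_, hR⟩
  calc ((insert x (insert y s)).image ρ.r).card ≤ (insert x (insert y s)).card :=
        Finset.card_image_le
    _ ≤ s.card + 2 :=
        (Finset.card_insert_le _ _).trans (Nat.succ_le_succ (Finset.card_insert_le _ _))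
    _ ≤ t + 3 := by omega

lemma card_add_one_le [Finite R] (ρ : S.Rep R) (hf : Function.Injective ρ.r) (s : Finset P) :
    s.card + 1 ≤ Nat.card R := by
  have h1 : (1 : R) ∉ s.image ρ.r := by
    simp only [Finset.mem_image, not_exists, not_and]
    exact fun p _ => ρ.ne_one p
  calc s.card + 1 = (insert 1 (s.image ρ.r)).card := by
        rw [Finset.card_insert_of_notMem h1, Finset.card_image_of_injective s hf]
    _ ≤ Nat.card R := by
        rw [← Set.ncard_coe_finset]
        exact Set.ncard_le_card _

end SlimPLS.Rep

/-- A faithful representation group of the `(2,2)`-GQ has order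
`2^4` or `2^5`. -/
theorem gq22_faithful_rep_card {P : Type*} (S : SlimPLS P)
    (hGQ : S.IsGQ 2) {R : Type*} [Group R] (ρ : S.Rep R)
    (hf : Function.Injective ρ.r) :
    Nat.card R = 2 ^ 4 ∨ Nat.card R = 2 ^ 5 := by
  obtain ⟨k, hk, hR⟩ := ρ.exists_natCard_eq_two_pow hGQ (by norm_num)
  have : Finite R := Nat.finite_of_card_ne_zero (by rw [hR]; positivity)
  obtain ⟨s, hs⟩ := hGQ.exists_finset_card_eq_two_mul_add_four
  have h9 : 9 ≤ 2 ^ k := by simpa [hs, hR] using ρ.card_add_one_le hf s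
  interval_cases k <;> simp_all
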